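/- A nonzero real number λ satisfies ((λ + i/2)/(λ − i/2))^N = 1 if and only if λ = (1/2)·cot(πk/N) for some integer k with 1 ≤ k ≤ N − 1 and 2k ≠ N. -/

import Mathlib

open Complex

/-!
The map `x ↦ (x + i/2)/(x - i/2)` is injective on ℝ and sends `cot θ / 2` to `exp (2iθ)`.
The `N`-th roots of unity are `exp (2iπk/N)` with `0 ≤ k < N`, and among them `k = 0` (the value `1`)
is never attained, while `2k = N` (the value `-1`) is attained only at `x = 0`; for every other `k`
we have `0 < πk/N < π`, so the cotangent is defined.
-/

noncomputable def magnonPhase (x : ℝ) : ℂ := ((x : ℂ) + I / 2) / ((x : ℂ) - I / 2)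

lemma ofReal_sub_I_div_two_ne_zero (x : ℝ) : (x : ℂ) - I / 2 ≠ 0 := by
  intro h
  simpa using congrArg Complex.im h

lemma magnonPhase_ne_one (x : ℝ) : magnonPhase x ≠ 1 := by
  rw [magnonPhase, Ne, div_eq_one_iff_eq (ofReal_sub_I_div_two_ne_zero x)]
  intro h
  have := congrArg Complex.im h
  norm_num at this

lemma magnonPhase_eq_neg_one_iff (x : ℝ) : magnonPhase x = -1 ↔ x = 0 := by
  rw [magnonPhase, div_eq_iff (ofReal_sub_I_div_two_ne_zero x)]
  constructor
  · intro h
    exact_mod_cast (by linear_combination h / 2 : (x : ℂ) = 0)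
  · rintro rfl
    push_cast
    ring

lemma magnonPhase_injective : Function.Injective magnonPhase := by
  intro a b h
  rw [magnonPhase, magnonPhase,
    div_eq_div_iff (ofReal_sub_I_div_two_ne_zero a) (ofReal_sub_I_div_two_ne_zero b)] at h
  exact_mod_cast (by linear_combination I * h + ((a : ℂ) - b) * I_sq : (a : ℂ) = b)

lemma magnonPhase_half_cot {θ : ℝ} (hθ : Real.sin θ ≠ 0) :
    magnonPhase ((1 / 2) * (Real.cos θ / Real.sin θ)) = exp (2 * θ * I) := by
  have hθ' : Complex.sin θ ≠ 0 := by exact_mod_cast hθ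
  have hexp : exp (2 * θ * I) = (Complex.cos θ + Complex.sin θ * I) ^ 2 := by
    rw [← exp_mul_I, ← exp_nat_mul]
    push_cast
    ring_nf
  rw [magnonPhase, div_eq_iff (ofReal_sub_I_div_two_ne_zero _), hexp]
  push_cast
  field_simp
  linear_combination (Complex.cos θ + Complex.sin θ * I) *
    (Complex.sin θ ^ 2 * I_sq - Complex.cos_sq_add_sin_sq (θ : ℂ))

lemma magnonPhase_eq_exp_iff {x θ : ℝ} (hθ : Real.sin θ ≠ 0) :
    magnonPhase x = exp (2 * θ * I) ↔ x = (1 / 2) * (Real.cos θ / Real.sin θ) := by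
  rw [← magnonPhase_half_cot hθ, magnonPhase_injective.eq_iff]

lemma pow_eq_one_iff_exists_exp {N : ℕ} (hN : N ≠ 0) {z : ℂ} :
    z ^ N = 1 ↔ ∃ k < N, z = exp (2 * (Real.pi * k / N : ℝ) * I) := by
  have : NeZero N := ⟨hN⟩
  have hζ := isPrimitiveRoot_exp N hN
  have hpow (k : ℕ) : exp (2 * Real.pi * I / N) ^ k = exp (2 * (Real.pi * k / N : ℝ) * I) := by
    rw [← exp_nat_mul]
    push_cast
    field_simp
  constructor
  · intro hz
    obtain ⟨k, hkN, hk⟩ := hζ.eq_pow_of_pow_eq_one hz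
    exact ⟨k, hkN, by rw [← hk, hpow]⟩
  · rintro ⟨k, -, rfl⟩
    rw [← hpow, pow_right_comm, hζ.pow_eq_one, one_pow]

lemma Real.sin_pi_mul_div_ne_zero {k N : ℕ} (hk : 0 < k) (hkN : k < N) :
    Real.sin (Real.pi * k / N) ≠ 0 := by
  have hk' : (0 : ℝ) < k := mod_cast hk
  have hkN' : (k : ℝ) < N := mod_cast hkN
  have hN' : (0 : ℝ) < N := hk'.trans hkN'
  refine (Real.sin_pos_of_pos_of_lt_pi (by positivity) ?_).ne'
  rw [div_lt_iff₀ hN']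
  exact mul_lt_mul_of_pos_left hkN' Real.pi_pos

theorem one_magnon_solutions (N : ℕ) (hN : 2 ≤ N) (lam : ℝ) (hlam : lam ≠ 0) :
    (((lam : ℂ) + I / 2) / ((lam : ℂ) - I / 2)) ^ N = 1 ↔
      ∃ k : ℕ, 1 ≤ k ∧ k ≤ N - 1 ∧ 2 * k ≠ N ∧
        lam = (1 / 2) * (Real.cos (Real.pi * k / N) / Real.sin (Real.pi * k / N)) := by
  change magnonPhase lam ^ N = 1 ↔ _
  rw [pow_eq_one_iff_exists_exp (by omega)]
  constructor
  · rintro ⟨k, hkN, hk⟩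
    have hk0 : k ≠ 0 := by
      rintro rfl
      exact magnonPhase_ne_one lam (by simpa using hk)
    have h2k : 2 * k ≠ N := by
      rintro rfl
      refine hlam ((magnonPhase_eq_neg_one_iff lam).mp ?_)
      rw [hk, ← exp_pi_mul_I]
      congr 1
      push_cast
      field_simp
    exact ⟨k, by omega, by omega, h2k,
      (magnonPhase_eq_exp_iff (Real.sin_pi_mul_div_ne_zero (by omega) hkN)).mp hk⟩
  · rintro ⟨k, hk1, hkN, -, hk⟩
    exact ⟨k, by omega,
      (magnonPhase_eq_exp_iff (Real.sin_pi_mul_div_ne_zero (by omega) (by omega))).mpr hk⟩
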